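/- arXiv:1203.2699 — 4 statements merged into one kernel-verified Lean document; each statement's English description precedes it below -/
import Mathlib

section
/- Let f : ℝ³ → ℝ be a continuous nonnegative function, supported in the annulus { ξ : 1 < ‖ξ‖ < 2 }, and not identically zero. Define G : ℝ³ → [0, ∞] by G(ξ) = Σ_{j ≥ 1} (2^{-2j} / j) · f(2^{-j} ξ). Then ∫_{ℝ³} ‖ξ‖ · G(ξ)² dξ < ∞ (so G is the Fourier transform of an element of the homogeneous Sobolev space Ḣ^{1/2}(ℝ³)), while ∫_{ℝ³} ‖ξ‖⁻¹ G(ξ) dξ = ∞. In particular, there exists a measurable G : ℝ³ → [0, ∞) with ∫ ‖ξ‖ G(ξ)² dξ < ∞ and ∫ ‖ξ‖⁻¹ G(ξ) dξ = ∞, so H^{1/2} (or Ḣ^{1/2}) integrability of |ĝ|² with weight ‖ξ‖ does not imply finiteness of ∫ ‖ξ‖⁻¹ |ĝ(ξ)| dξ. -/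
open MeasureTheory ENNReal

/-!
The `j`-th term of `G` lives on the dyadic annulus `2^(j+1) < ‖ξ‖ < 2^(j+2)`, so the terms have
disjoint supports and `G²` is the sum of their squares. Substituting `η = 2^(-(j+1)) ξ` in `ℝ³`
turns the contribution of the `j`-th term to `∫ ‖ξ‖ G²` into `(j+1)⁻² ∫ ‖η‖ f(η)²`, and its
contribution to `∫ ‖ξ‖⁻¹ G` into `(j+1)⁻¹ ∫ ‖η‖⁻¹ f(η)`: the first series converges, the second
is the harmonic series.
-/

namespace ENNReal

variable {ι : Type*} {g : ι → ℝ≥0∞}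

theorem tsum_pow_of_support_subsingleton (hg : (Function.support g).Subsingleton) {n : ℕ}
    (hn : n ≠ 0) : (∑' j, g j) ^ n = ∑' j, g j ^ n := by
  rcases hg.eq_empty_or_singleton with h | ⟨j, h⟩
  · simp [Function.support_eq_empty_iff.1 h, hn]
  · have hj (i : ι) (hi : i ≠ j) : g i = 0 := Function.notMem_support.1 (h ▸ hi)
    rw [tsum_eq_single j hj, tsum_eq_single j fun i hi => by simp [hj i hi, hn]]

theorem tsum_ne_top_of_support_subsingleton (hg : (Function.support g).Subsingleton)
    (hg_top : ∀ j, g j ≠ ⊤) : ∑' j, g j ≠ ⊤ := by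
  rcases hg.eq_empty_or_singleton with h | ⟨j, h⟩
  · simp [Function.support_eq_empty_iff.1 h]
  · rw [tsum_eq_single j fun i hi => Function.notMem_support.1 (h ▸ hi)]
    exact hg_top j

theorem tsum_enorm_inv_nat_add_one_pow_ne_top_iff (p : ℕ) :
    ∑' n : ℕ, ‖((n : ℝ) + 1)⁻¹ ^ p‖ₑ ≠ ⊤ ↔ 1 < p := by
  rw [tsum_enorm_ne_top_iff_summable_norm, ← Nat.one_lt_cast (α := ℝ),
    ← Real.summable_one_div_nat_add_rpow 1 p]
  refine summable_congr fun n => ?_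
  rw [Real.norm_of_nonneg (by positivity), abs_of_pos (by positivity), Real.rpow_natCast,
    one_div, inv_pow]

end ENNReal

theorem enorm_pow_mul_mul_enorm_rpow_neg {𝕜 : Type*} [NormedField 𝕜] {x : 𝕜} (hx : x ≠ 0)
    (n : ℕ) (y : 𝕜) : ‖x ^ n * y‖ₑ * ‖x‖ₑ ^ (-(n : ℝ)) = ‖y‖ₑ := by
  rw [enorm_mul, enorm_pow, ENNReal.rpow_neg, ENNReal.rpow_natCast, mul_right_comm,
    ENNReal.mul_inv_cancel (pow_ne_zero n (enorm_ne_zero.2 hx)) (pow_ne_top enorm_ne_top), one_mul]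

theorem support_comp_two_zpow_neg_smul_subsingleton {E M : Type*} [SeminormedAddCommGroup E]
    [NormedSpace ℝ E] [Zero M] {F : E → M} (hF : ∀ η, F η ≠ 0 → 1 < ‖η‖ ∧ ‖η‖ < 2) (ξ : E) :
    (Function.support fun j : ℤ => F ((2 : ℝ) ^ (-j) • ξ)).Subsingleton := by
  have hannulus {j : ℤ} (hj : F ((2 : ℝ) ^ (-j) • ξ) ≠ 0) :
      (2 : ℝ) ^ j < ‖ξ‖ ∧ ‖ξ‖ < 2 ^ (j + 1) := by
    have h2j : (0 : ℝ) < 2 ^ j := by positivity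
    obtain ⟨h1, h2⟩ := hF _ hj
    rw [norm_smul, zpow_neg, norm_inv, Real.norm_of_nonneg h2j.le, inv_mul_eq_div] at h1 h2
    rw [zpow_add_one₀ two_ne_zero]
    exact ⟨(one_lt_div h2j).1 h1, (div_lt_iff₀' h2j).1 h2⟩
  intro i hi j hj
  obtain ⟨hi₁, hi₂⟩ := hannulus hi
  obtain ⟨hj₁, hj₂⟩ := hannulus hj
  have := (zpow_lt_zpow_iff_right₀ (one_lt_two (α := ℝ))).1 (hi₁.trans hj₂)
  have := (zpow_lt_zpow_iff_right₀ (one_lt_two (α := ℝ))).1 (hj₁.trans hi₂)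
  omega

section WeightedIntegrals

variable {E : Type*} [NormedAddCommGroup E] [MeasurableSpace E] [OpensMeasurableSpace E]
  (μ : Measure E)

theorem lintegral_enorm_rpow_mul_enorm_ne_zero [μ.IsOpenPosMeasure] {s : ℝ} (hs : s ≤ 0)
    {f : E → ℝ} (hf : Continuous f) (hf0 : f ≠ 0) : ∫⁻ η, ‖η‖ₑ ^ s * ‖f η‖ₑ ∂μ ≠ 0 := by
  have hmeas : Measurable fun η : E => ‖η‖ₑ ^ s * ‖f η‖ₑ :=
    (measurable_enorm.pow_const s).mul hf.enorm.measurable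
  rw [Ne, lintegral_eq_zero_iff hmeas]
  intro h
  refine hf0 ((hf.ae_eq_iff_eq μ continuous_const).1 ?_)
  filter_upwards [h] with η hη
  exact (by simpa [ENNReal.rpow_eq_zero_iff, hs.not_gt] using hη : f η = 0)

theorem lintegral_enorm_mul_enorm_sq_lt_top [IsFiniteMeasureOnCompacts μ] {f : E → ℝ}
    (hf : Continuous f) (hf_supp : HasCompactSupport f) : ∫⁻ η, ‖η‖ₑ * ‖f η‖ₑ ^ 2 ∂μ < ⊤ := by
  have hint : Integrable (fun η => ‖η‖ * f η ^ 2) μ :=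
    (continuous_norm.mul (hf.pow 2)).integrable_of_hasCompactSupport
      (hf_supp.mono (Function.support_subset_iff'.2 fun η hη => by
        simp [Function.notMem_support.1 hη]))
  simpa [hasFiniteIntegral_iff_enorm] using hint.hasFiniteIntegral

end WeightedIntegrals

section Scaling

variable {E : Type*} [NormedAddCommGroup E] [NormedSpace ℝ E] [MeasurableSpace E] [BorelSpace E]
  [FiniteDimensional ℝ E] (μ : Measure E) [μ.IsAddHaarMeasure]

theorem lintegral_comp_smul_of_ne_zero (F : E → ℝ≥0∞) {c : ℝ} (hc : c ≠ 0) :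
    ∫⁻ ξ, F (c • ξ) ∂μ = ‖c‖ₑ ^ (-(Module.finrank ℝ E : ℝ)) * ∫⁻ η, F η ∂μ := by
  rw [← (measurableEmbedding_const_smul₀ hc).lintegral_map, Measure.map_addHaar_smul μ hc,
    lintegral_smul_measure, smul_eq_mul, ← Real.enorm_eq_ofReal_abs, enorm_inv (by positivity),
    enorm_pow, ENNReal.rpow_neg, ENNReal.rpow_natCast]

theorem lintegral_enorm_rpow_mul_comp_smul (s : ℝ) (F : E → ℝ≥0∞) {c : ℝ} (hc : c ≠ 0) :
    ∫⁻ ξ, ‖ξ‖ₑ ^ s * F (c • ξ) ∂μ =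
      ‖c‖ₑ ^ (-(s + Module.finrank ℝ E)) * ∫⁻ η, ‖η‖ₑ ^ s * F η ∂μ := by
  have hc0 : ‖c‖ₑ ≠ 0 := enorm_ne_zero.2 hc
  have weight (ξ : E) : ‖ξ‖ₑ ^ s = ‖c‖ₑ ^ (-s) * ‖c • ξ‖ₑ ^ s := by
    rw [enorm_smul, ENNReal.mul_rpow_of_ne_top enorm_ne_top enorm_ne_top, ← mul_assoc,
      ← ENNReal.rpow_add _ _ hc0 enorm_ne_top, neg_add_cancel, ENNReal.rpow_zero, one_mul]
  rw [lintegral_congr fun ξ => by rw [weight, mul_assoc],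
    lintegral_const_mul' _ _ (ENNReal.rpow_ne_top_of_ne_zero hc0 enorm_ne_top),
    lintegral_comp_smul_of_ne_zero μ (fun η => ‖η‖ₑ ^ s * F η) hc, ← mul_assoc,
    ← ENNReal.rpow_add _ _ hc0 enorm_ne_top, neg_add]

theorem lintegral_enorm_rpow_mul_tsum_comp_smul {ι : Type*} [Countable ι] (s : ℝ)
    {F : E → ℝ≥0∞} (hF : Measurable F) (a : ι → ℝ≥0∞) {c : ι → ℝ} (hc : ∀ j, c j ≠ 0) :
    ∫⁻ ξ, ‖ξ‖ₑ ^ s * ∑' j, a j * F (c j • ξ) ∂μ =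
      (∑' j, a j * ‖c j‖ₑ ^ (-(s + Module.finrank ℝ E))) * ∫⁻ η, ‖η‖ₑ ^ s * F η ∂μ := by
  have hmeas (j : ι) : Measurable fun ξ : E => ‖ξ‖ₑ ^ s * F (c j • ξ) :=
    (measurable_enorm.pow_const s).mul (hF.comp (measurable_const_smul (c j)))
  simp_rw [← ENNReal.tsum_mul_left, mul_left_comm _ (a _)]
  rw [lintegral_tsum fun j => ((hmeas j).const_mul (a j)).aemeasurable, ← ENNReal.tsum_mul_right]
  congr 1 with j
  rw [lintegral_const_mul _ (hmeas j), lintegral_enorm_rpow_mul_comp_smul μ s F (hc j), mul_assoc]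

end Scaling

section Lacunary

variable {E : Type*} [NormedAddCommGroup E] [NormedSpace ℝ E]

noncomputable def lacunaryScale (j : ℕ) : ℝ := 2 ^ (-((j : ℤ) + 1))

-- The paper's `j`-th term (`j ≥ 1`) of `G` is `lacunaryTerm f (j - 1)`.
noncomputable def lacunaryTerm (f : E → ℝ) (j : ℕ) (ξ : E) : ℝ≥0∞ :=
  ‖lacunaryScale j ^ 2 * ((j : ℝ) + 1)⁻¹‖ₑ * ‖f (lacunaryScale j • ξ)‖ₑ

theorem lacunaryScale_ne_zero (j : ℕ) : lacunaryScale j ≠ 0 := by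
  unfold lacunaryScale; positivity

theorem support_lacunaryTerm_subsingleton {f : E → ℝ}
    (hf_supp : ∀ η, f η ≠ 0 → 1 < ‖η‖ ∧ ‖η‖ < 2) (ξ : E) :
    (Function.support fun j => lacunaryTerm f j ξ).Subsingleton :=
  ((support_comp_two_zpow_neg_smul_subsingleton hf_supp ξ).preimage
    (fun i j h => by simpa using h : Function.Injective fun j : ℕ => (j : ℤ) + 1)).anti
    fun _ hj => enorm_ne_zero.1 (right_ne_zero_of_mul hj)

theorem tsum_lacunaryTerm_ne_top {f : E → ℝ} (hf_supp : ∀ η, f η ≠ 0 → 1 < ‖η‖ ∧ ‖η‖ < 2)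
    (ξ : E) : ∑' j, lacunaryTerm f j ξ ≠ ⊤ :=
  ENNReal.tsum_ne_top_of_support_subsingleton (support_lacunaryTerm_subsingleton hf_supp ξ)
    fun _ => mul_ne_top enorm_ne_top enorm_ne_top

variable [MeasurableSpace E] [BorelSpace E]

theorem measurable_tsum_lacunaryTerm {f : E → ℝ} (hf : Measurable f) :
    Measurable fun ξ => ∑' j, lacunaryTerm f j ξ :=
  .tsum fun _ => measurable_const.mul (hf.enorm.comp (measurable_const_smul _))

variable [FiniteDimensional ℝ E] (μ : Measure E) [μ.IsAddHaarMeasure]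

theorem lintegral_enorm_mul_tsum_lacunaryTerm_sq_lt_top (hd : Module.finrank ℝ E = 3)
    {f : E → ℝ} (hf : Continuous f) (hf_supp : ∀ η, f η ≠ 0 → 1 < ‖η‖ ∧ ‖η‖ < 2) :
    ∫⁻ ξ, ‖ξ‖ₑ * (∑' j, lacunaryTerm f j ξ) ^ 2 ∂μ < ⊤ := by
  have hf_cpt : HasCompactSupport f := HasCompactSupport.intro (isCompact_closedBall 0 2)
    fun ξ hξ => by_contra fun h => hξ (mem_closedBall_zero_iff.2 (hf_supp ξ h).2.le)
  calc ∫⁻ ξ, ‖ξ‖ₑ * (∑' j, lacunaryTerm f j ξ) ^ 2 ∂μ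
      = ∫⁻ ξ, ‖ξ‖ₑ ^ (1 : ℝ) * ∑' j, ‖lacunaryScale j ^ 2 * ((j : ℝ) + 1)⁻¹‖ₑ ^ 2 *
          ‖f (lacunaryScale j • ξ)‖ₑ ^ 2 ∂μ :=
        lintegral_congr fun ξ => by
          rw [ENNReal.rpow_one, ENNReal.tsum_pow_of_support_subsingleton
            (support_lacunaryTerm_subsingleton hf_supp ξ) two_ne_zero]
          simp only [lacunaryTerm, mul_pow]
    _ = (∑' j, ‖lacunaryScale j ^ 2 * ((j : ℝ) + 1)⁻¹‖ₑ ^ 2 *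
            ‖lacunaryScale j‖ₑ ^ (-(1 + 3 : ℝ))) * ∫⁻ η, ‖η‖ₑ ^ (1 : ℝ) * ‖f η‖ₑ ^ 2 ∂μ := by
        rw [lintegral_enorm_rpow_mul_tsum_comp_smul μ 1 (hf.enorm.measurable.pow_const 2) _
          lacunaryScale_ne_zero, hd, Nat.cast_ofNat]
    _ = (∑' j : ℕ, ‖((j : ℝ) + 1)⁻¹ ^ 2‖ₑ) * ∫⁻ η, ‖η‖ₑ * ‖f η‖ₑ ^ 2 ∂μ := by
        simp only [← enorm_pow, mul_pow, ← pow_mul, ENNReal.rpow_one,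
          show -(1 + 3 : ℝ) = -((2 * 2 : ℕ) : ℝ) by norm_num,
          enorm_pow_mul_mul_enorm_rpow_neg (lacunaryScale_ne_zero _)]
    _ < ⊤ := mul_lt_top ((ENNReal.tsum_enorm_inv_nat_add_one_pow_ne_top_iff 2).2 one_lt_two).lt_top
        (lintegral_enorm_mul_enorm_sq_lt_top μ hf hf_cpt)

theorem lintegral_inv_enorm_mul_tsum_lacunaryTerm_eq_top (hd : Module.finrank ℝ E = 3)
    {f : E → ℝ} (hf : Continuous f) (hf0 : f ≠ 0) :
    ∫⁻ ξ, ‖ξ‖ₑ⁻¹ * ∑' j, lacunaryTerm f j ξ ∂μ = ⊤ :=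
  calc ∫⁻ ξ, ‖ξ‖ₑ⁻¹ * ∑' j, lacunaryTerm f j ξ ∂μ
      = ∫⁻ ξ, ‖ξ‖ₑ ^ (-1 : ℝ) * ∑' j, ‖lacunaryScale j ^ 2 * ((j : ℝ) + 1)⁻¹‖ₑ *
          ‖f (lacunaryScale j • ξ)‖ₑ ∂μ := by
        simp only [ENNReal.rpow_neg_one, lacunaryTerm]
    _ = (∑' j, ‖lacunaryScale j ^ 2 * ((j : ℝ) + 1)⁻¹‖ₑ * ‖lacunaryScale j‖ₑ ^ (-(-1 + 3 : ℝ))) *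
          ∫⁻ η, ‖η‖ₑ ^ (-1 : ℝ) * ‖f η‖ₑ ∂μ := by
        rw [lintegral_enorm_rpow_mul_tsum_comp_smul μ (-1) hf.enorm.measurable _
          lacunaryScale_ne_zero, hd, Nat.cast_ofNat]
    _ = (∑' j : ℕ, ‖((j : ℝ) + 1)⁻¹ ^ 1‖ₑ) * ∫⁻ η, ‖η‖ₑ ^ (-1 : ℝ) * ‖f η‖ₑ ∂μ := by
        simp only [show -(-1 + 3 : ℝ) = -((2 : ℕ) : ℝ) by norm_num, pow_one,
          enorm_pow_mul_mul_enorm_rpow_neg (lacunaryScale_ne_zero _)]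
    _ = ⊤ := by
        rw [not_ne_iff.1 ((ENNReal.tsum_enorm_inv_nat_add_one_pow_ne_top_iff 1).not.2
          (lt_irrefl 1))]
        exact top_mul (lintegral_enorm_rpow_mul_enorm_ne_zero μ (by norm_num) hf hf0)

end Lacunary

/-- The lacunary counterexample: if `f : ℝ³ → ℝ` is continuous, nonnegative, supported in
the annulus `{1 < ‖ξ‖ < 2}` and not identically zero, and
`G ξ = ∑_{j ≥ 1} (2^{-2j}/j) f(2^{-j} ξ)`, then `∫ ‖ξ‖ G² < ∞` but `∫ ‖ξ‖⁻¹ G = ∞`.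
In particular there is a measurable nonnegative real-valued `G'` with
`∫ ‖ξ‖ G'² < ∞` and `∫ ‖ξ‖⁻¹ G' = ∞`. -/
theorem stmt_1 (f : EuclideanSpace ℝ (Fin 3) → ℝ)
    (hf_cont : Continuous f) (hf_nonneg : ∀ ξ, 0 ≤ f ξ)
    (hf_supp : ∀ ξ, f ξ ≠ 0 → 1 < ‖ξ‖ ∧ ‖ξ‖ < 2)
    (hf_ne : f ≠ 0)
    (G : EuclideanSpace ℝ (Fin 3) → ℝ≥0∞)
    (hG : ∀ ξ, G ξ = ∑' j : ℕ,
      ENNReal.ofReal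
        ((2 : ℝ) ^ (-2 * ((j : ℤ) + 1)) / ((j : ℝ) + 1) *
          f (((2 : ℝ) ^ (-((j : ℤ) + 1))) • ξ))) :
    (∫⁻ ξ, (‖ξ‖₊ : ℝ≥0∞) * (G ξ) ^ 2) < ⊤ ∧
    (∫⁻ ξ, (‖ξ‖₊ : ℝ≥0∞)⁻¹ * G ξ) = ⊤ ∧
    ∃ G' : EuclideanSpace ℝ (Fin 3) → ℝ, Measurable G' ∧ (∀ ξ, 0 ≤ G' ξ) ∧
      (∫⁻ ξ, (‖ξ‖₊ : ℝ≥0∞) * ENNReal.ofReal (G' ξ) ^ 2) < ⊤ ∧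
      (∫⁻ ξ, (‖ξ‖₊ : ℝ≥0∞)⁻¹ * ENNReal.ofReal (G' ξ)) = ⊤ := by
  have hG_eq (ξ) : ∑' j, lacunaryTerm f j ξ = G ξ := by
    rw [hG]
    congr 1 with j
    rw [lacunaryTerm, ← enorm_mul, Real.enorm_of_nonneg (mul_nonneg (by positivity) (hf_nonneg _)),
      lacunaryScale, ← zpow_natCast, ← zpow_mul, div_eq_mul_inv]
    ring_nf
  have hd : Module.finrank ℝ (EuclideanSpace ℝ (Fin 3)) = 3 := finrank_euclideanSpace_fin
  have hint_sq := lintegral_enorm_mul_tsum_lacunaryTerm_sq_lt_top volume hd hf_cont hf_supp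
  have hint_inv := lintegral_inv_enorm_mul_tsum_lacunaryTerm_eq_top volume hd hf_cont hf_ne
  simp only [hG_eq, enorm_eq_nnnorm] at hint_sq hint_inv
  have hG_top (ξ) : G ξ ≠ ⊤ := hG_eq ξ ▸ tsum_lacunaryTerm_ne_top hf_supp ξ
  have hG_meas : Measurable G := by
    simpa only [hG_eq] using measurable_tsum_lacunaryTerm hf_cont.measurable
  refine ⟨hint_sq, hint_inv, fun ξ => (G ξ).toReal, hG_meas.ennreal_toReal,
    fun ξ => toReal_nonneg, ?_⟩
  simpa only [ofReal_toReal (hG_top _)] using ⟨hint_sq, hint_inv⟩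
end

section
/- For all measurable functions F, G : ℝ³ → [0, ∞], one has ∫_{ℝ³} ∫_{ℝ³} F(η) · G(ξ − η) dη dξ ≤ (1/2) [ ( ∫ ‖ξ‖⁻¹ F(ξ) dξ ) ( ∫ ‖ξ‖ G(ξ) dξ ) + ( ∫ ‖ξ‖ F(ξ) dξ ) ( ∫ ‖ξ‖⁻¹ G(ξ) dξ ) ], where all integrals are over ℝ³ with Lebesgue measure, valued in [0, ∞]. -/
/-!
By AM–GM, `1 ≤ (‖η‖⁻¹ ‖ξ - η‖ + ‖η‖ ‖ξ - η‖⁻¹) / 2` unless `η = ξ - η = 0`, which forces `ξ = 0`,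
a null set. Inserting this factor and using translation invariance of Lebesgue measure under
Tonelli, each of the two weighted double integrals factors as a product of single integrals.
-/

open MeasureTheory ENNReal NNReal

theorem two_le_inv_mul_add_mul_inv {a b : ℝ≥0} (h : a ≠ 0 ∨ b ≠ 0) :
    2 ≤ (a : ℝ≥0∞)⁻¹ * b + a * (b : ℝ≥0∞)⁻¹ := by
  rcases eq_or_ne a 0 with rfl | ha
  · simp [h.resolve_left fun ha ↦ ha rfl]
  rcases eq_or_ne b 0 with rfl | hb
  · simp [ha]
  rw [← coe_inv ha, ← coe_inv hb, ← coe_mul, ← coe_mul, ← coe_add, ← coe_ofNat,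
    ENNReal.coe_le_coe, ← NNReal.coe_le_coe]
  have ha' : (0 : ℝ) < a := by positivity
  have hb' : (0 : ℝ) < b := by positivity
  push_cast
  rw [inv_mul_eq_div, ← div_eq_mul_inv, div_add_div _ _ ha'.ne' hb'.ne',
    le_div_iff₀ (by positivity)]
  nlinarith [sq_nonneg ((a : ℝ) - b)]

theorem lintegral_lintegral_mul_sub {G : Type*} [MeasurableSpace G] [AddGroup G]
    [MeasurableAdd₂ G] [MeasurableNeg G] (μ : Measure G) [SFinite μ] [μ.IsAddRightInvariant]
    {f g : G → ℝ≥0∞} (hf : Measurable f) (hg : Measurable g) :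
    ∫⁻ ξ, ∫⁻ η, f η * g (ξ - η) ∂μ ∂μ = (∫⁻ x, f x ∂μ) * ∫⁻ x, g x ∂μ := by
  rw [lintegral_lintegral_swap (by fun_prop)]
  have translate (η : G) : ∫⁻ ξ, f η * g (ξ - η) ∂μ = f η * ∫⁻ x, g x ∂μ := by
    rw [lintegral_const_mul _ (by fun_prop), lintegral_sub_right_eq_self g η]
  simp_rw [translate]
  exact lintegral_mul_const _ hf

theorem mul_le_inv_two_mul_weighted_add {E : Type*} [NormedAddGroup E] {x y : E}
    (h : x ≠ 0 ∨ y ≠ 0) (a b : ℝ≥0∞) :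
    a * b ≤ 2⁻¹ * ((‖x‖₊ : ℝ≥0∞)⁻¹ * a * (‖y‖₊ * b) + ‖x‖₊ * a * ((‖y‖₊ : ℝ≥0∞)⁻¹ * b)) :=
  calc a * b = 2⁻¹ * 2 * (a * b) := by
        rw [ENNReal.inv_mul_cancel two_ne_zero ofNat_ne_top, one_mul]
    _ ≤ 2⁻¹ * ((‖x‖₊ : ℝ≥0∞)⁻¹ * ‖y‖₊ + ‖x‖₊ * (‖y‖₊ : ℝ≥0∞)⁻¹) * (a * b) := by
        gcongr
        exact two_le_inv_mul_add_mul_inv (by simpa using h)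
    _ = _ := by ring

theorem lintegral_lintegral_add_left {α β : Type*} [MeasurableSpace α] [MeasurableSpace β]
    {μ : Measure α} {ν : Measure β} [SFinite ν] {f : α → β → ℝ≥0∞}
    (hf : Measurable (Function.uncurry f)) (g : α → β → ℝ≥0∞) :
    ∫⁻ x, ∫⁻ y, f x y + g x y ∂ν ∂μ = ∫⁻ x, ∫⁻ y, f x y ∂ν ∂μ + ∫⁻ x, ∫⁻ y, g x y ∂ν ∂μ := by
  have inner (x : α) : ∫⁻ y, f x y + g x y ∂ν = ∫⁻ y, f x y ∂ν + ∫⁻ y, g x y ∂ν :=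
    lintegral_add_left (hf.comp measurable_prodMk_left) _
  simp_rw [inner]
  exact lintegral_add_left hf.lintegral_prod_right' _

/-- Asymmetric bilinear convolution estimate: for measurable `F, G : ℝ³ → [0,∞]`,
`∬ F(η) G(ξ-η) dη dξ ≤ (1/2)[(∫ ‖ξ‖⁻¹ F)(∫ ‖ξ‖ G) + (∫ ‖ξ‖ F)(∫ ‖ξ‖⁻¹ G)]`. -/
theorem stmt_5 (F G : EuclideanSpace ℝ (Fin 3) → ℝ≥0∞)
    (hF : Measurable F) (hG : Measurable G) :
    (∫⁻ ξ, ∫⁻ η, F η * G (ξ - η)) ≤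
      2⁻¹ * ((∫⁻ ξ, (‖ξ‖₊ : ℝ≥0∞)⁻¹ * F ξ) * (∫⁻ ξ, (‖ξ‖₊ : ℝ≥0∞) * G ξ) +
        (∫⁻ ξ, (‖ξ‖₊ : ℝ≥0∞) * F ξ) * (∫⁻ ξ, (‖ξ‖₊ : ℝ≥0∞)⁻¹ * G ξ)) := by
  set A := fun ξ η : EuclideanSpace ℝ (Fin 3) ↦
    (‖η‖₊ : ℝ≥0∞)⁻¹ * F η * ((‖ξ - η‖₊ : ℝ≥0∞) * G (ξ - η))
  set B := fun ξ η : EuclideanSpace ℝ (Fin 3) ↦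
    (‖η‖₊ : ℝ≥0∞) * F η * ((‖ξ - η‖₊ : ℝ≥0∞)⁻¹ * G (ξ - η))
  have pointwise : ∀ᵐ ξ, ∀ η, F η * G (ξ - η) ≤ 2⁻¹ * (A ξ η + B ξ η) := by
    filter_upwards [volume.ae_ne 0] with ξ hξ η
    refine mul_le_inv_two_mul_weighted_add ?_ _ _
    by_contra! h
    exact hξ (by simpa [h.1] using h.2)
  calc (∫⁻ ξ, ∫⁻ η, F η * G (ξ - η))
      ≤ ∫⁻ ξ, ∫⁻ η, 2⁻¹ * (A ξ η + B ξ η) :=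
        lintegral_mono_ae (pointwise.mono fun ξ hξ ↦ lintegral_mono (hξ ·))
    _ = 2⁻¹ * ((∫⁻ ξ, ∫⁻ η, A ξ η) + ∫⁻ ξ, ∫⁻ η, B ξ η) := by
        simp_rw [lintegral_const_mul' _ _ (inv_ne_top.2 two_ne_zero)]
        rw [lintegral_lintegral_add_left (by fun_prop)]
    _ = _ := by
        rw [lintegral_lintegral_mul_sub volume (f := fun x ↦ (‖x‖₊ : ℝ≥0∞)⁻¹ * F x)
            (g := fun x ↦ ‖x‖₊ * G x) (by fun_prop) (by fun_prop),
          lintegral_lintegral_mul_sub volume (f := fun x ↦ (‖x‖₊ : ℝ≥0∞) * F x)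
            (g := fun x ↦ (‖x‖₊ : ℝ≥0∞)⁻¹ * G x) (by fun_prop) (by fun_prop)]
end

section
/- Let μ > 0, let y : [0, ∞) → ℝ be continuous and nonnegative with y(0) < μ, and let z : [0, ∞) → ℝ be nonnegative and locally integrable. Assume the integral inequality: for every t ≥ 0, y(t) + μ ∫₀ᵗ z(s) ds ≤ y(0) + ∫₀ᵗ y(s) z(s) ds. Then for every t ≥ 0 one has y(t) ≤ y(0), and moreover (μ − y(0)) · ∫₀ᵗ z(s) ds ≤ y(0). -/
/-!
Since `y` starts strictly below `μ` and is continuous, it stays below `μ` on some initial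
interval. As long as `y ≤ μ` on `[0, T]`, the term `∫ y z` is absorbed by `μ ∫ z` and the
inequality forces `y T ≤ y 0 < μ`, so `y` can never reach the level `μ` (look at the first time
it does). Hence `y ≤ y 0` everywhere, and then bounding `∫ y z` by `y 0 ∫ z` gives the
space-time bound.
-/

open MeasureTheory Set

theorem ContinuousOn.lt_of_bootstrap {f : ℝ → ℝ} {a μ : ℝ} (hf : ContinuousOn f (Ici a))
    (ha : f a < μ) (hboot : ∀ T, a ≤ T → (∀ s ∈ Icc a T, f s ≤ μ) → f T < μ) :
    ∀ t, a ≤ t → f t < μ := by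
  by_contra! ⟨t₀, ht₀, hμt₀⟩
  -- `sInf A` is the first time `f` reaches the level `μ`.
  set A := Ici a ∩ f ⁻¹' Ici μ
  have hA_bdd : BddBelow A := ⟨a, fun _ hx => hx.1⟩
  have hT : sInf A ∈ A :=
    (hf.preimage_isClosed_of_isClosed isClosed_Ici isClosed_Ici).csInf_mem ⟨t₀, ht₀, hμt₀⟩ hA_bdd
  have hbefore : ∀ s, a ≤ s → s < sInf A → f s < μ := fun s hs hsT =>
    lt_of_not_ge fun hμs => (csInf_le hA_bdd ⟨hs, hμs⟩).not_gt hsT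
  obtain ⟨c, hc, hfc⟩ : μ ∈ f '' Icc a (sInf A) :=
    intermediate_value_Icc hT.1 (hf.mono Icc_subset_Ici_self) ⟨ha.le, hT.2⟩
  have hcT : c = sInf A := le_antisymm hc.2 (csInf_le hA_bdd ⟨hc.1, hfc.ge⟩)
  have hle : ∀ s ∈ Icc a (sInf A), f s ≤ μ := fun s hs =>
    hs.2.lt_or_eq.elim (fun h => (hbefore s hs.1 h).le) fun h => h ▸ hcT ▸ hfc.le
  exact (hboot _ hT.1 hle).not_ge hT.2

theorem intervalIntegral.integral_mul_le_const_mul {f g : ℝ → ℝ} {a b c : ℝ} (hab : a ≤ b)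
    (hfg : IntervalIntegrable (fun s => f s * g s) volume a b)
    (hg : IntervalIntegrable g volume a b) (hg_nonneg : ∀ s ∈ Icc a b, 0 ≤ g s)
    (hf : ∀ s ∈ Icc a b, f s ≤ c) :
    ∫ s in a..b, f s * g s ≤ c * ∫ s in a..b, g s := by
  rw [← intervalIntegral.integral_const_mul]
  exact intervalIntegral.integral_mono_on hab hfg (hg.const_mul c) fun s hs =>
    mul_le_mul_of_nonneg_right (hf s hs) (hg_nonneg s hs)

theorem stmt_7_general (μ : ℝ) (y z : ℝ → ℝ)
    (hy_cont : ContinuousOn y (Set.Ici 0))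
    (hy_nonneg : ∀ t, 0 ≤ t → 0 ≤ y t)
    (hy0 : y 0 < μ)
    (hz_nonneg : ∀ t, 0 ≤ t → 0 ≤ z t)
    (hz_int : ∀ t, 0 ≤ t → IntervalIntegrable z volume 0 t)
    (hineq : ∀ t, 0 ≤ t →
      y t + μ * ∫ s in (0:ℝ)..t, z s ≤ y 0 + ∫ s in (0:ℝ)..t, y s * z s) :
    ∀ t, 0 ≤ t → y t ≤ y 0 ∧ (μ - y 0) * ∫ s in (0:ℝ)..t, z s ≤ y 0 := by
  have hyz_int (t : ℝ) (ht : 0 ≤ t) : IntervalIntegrable (fun s => y s * z s) volume 0 t :=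
    (hz_int t ht).continuousOn_mul (hy_cont.mono (by simp [uIcc_of_le ht, Icc_subset_Ici_self]))
  have hbound (c t : ℝ) (ht : 0 ≤ t) (hc : ∀ s ∈ Icc 0 t, y s ≤ c) :
      y t + μ * ∫ s in (0:ℝ)..t, z s ≤ y 0 + c * ∫ s in (0:ℝ)..t, z s :=
    (hineq t ht).trans <| add_le_add_right (intervalIntegral.integral_mul_le_const_mul ht
      (hyz_int t ht) (hz_int t ht) (fun s hs => hz_nonneg s hs.1) hc) _
  have hlt : ∀ t, 0 ≤ t → y t < μ := hy_cont.lt_of_bootstrap hy0 fun T hT hle => by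
    linarith [hbound μ T hT hle]
  have hle (t : ℝ) (ht : 0 ≤ t) : y t ≤ y 0 := by
    linarith [hbound μ t ht fun s hs => (hlt s hs.1).le]
  intro t ht
  refine ⟨hle t ht, ?_⟩
  linarith [hbound (y 0) t ht fun s hs => hle s hs.1, hy_nonneg t ht]

/-- Continuity-argument a priori bound: if `y` is continuous and nonnegative on `[0,∞)`
with `y 0 < μ`, `z` is nonnegative and locally integrable on `[0,∞)`, and
`y t + μ ∫₀ᵗ z ≤ y 0 + ∫₀ᵗ y z` for all `t ≥ 0`, then `y t ≤ y 0` and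
`(μ - y 0) ∫₀ᵗ z ≤ y 0` for all `t ≥ 0`. -/
theorem stmt_7 (μ : ℝ) (hμ : 0 < μ) (y z : ℝ → ℝ)
    (hy_cont : ContinuousOn y (Set.Ici 0))
    (hy_nonneg : ∀ t, 0 ≤ t → 0 ≤ y t)
    (hy0 : y 0 < μ)
    (hz_nonneg : ∀ t, 0 ≤ t → 0 ≤ z t)
    (hz_int : ∀ t, 0 ≤ t → IntervalIntegrable z volume 0 t)
    (hineq : ∀ t, 0 ≤ t →
      y t + μ * ∫ s in (0:ℝ)..t, z s ≤ y 0 + ∫ s in (0:ℝ)..t, y s * z s) :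
    ∀ t, 0 ≤ t → y t ≤ y 0 ∧ (μ - y 0) * ∫ s in (0:ℝ)..t, z s ≤ y 0 :=
  stmt_7_general μ y z hy_cont hy_nonneg hy0 hz_nonneg hz_int hineq
end

section
/- Let ζ : ℝ³ → ℂ be a Schwartz function and for λ > 0 let ζ^λ(x) = λ^{-3} ζ(x/λ). Then for every λ > 0 there exists a constant C_λ > 0 (depending only on ζ and λ) such that for every integrable f : ℝ³ → ℂ with ∫_{ℝ³} ‖ξ‖⁻¹ |𝓕f(ξ)| dξ < ∞, the convolution ζ^λ ∗ f satisfies the uniform bound sup_{x ∈ ℝ³} |(ζ^λ ∗ f)(x)| ≤ C_λ · ∫_{ℝ³} ‖ξ‖⁻¹ |𝓕f(ξ)| dξ. -/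
/-!
Write the rescaled, reflected mollifier as `w = 𝓕 u` with `u` Schwartz. The translate
`w (· - x)` is the Fourier transform of the modulation `𝐞 ⟪·, x⟫ • u`, so self-adjointness of
`𝓕` turns `(ζ^λ ∗ f)(x)` into `∫ 𝐞 ⟪y, x⟫ u(y) 𝓕f(y) dy`, and `|u(y)| ≤ C ‖y‖⁻¹` because `u`
decays.
-/

open MeasureTheory ENNReal FourierTransform SchwartzMap
open scoped RealInnerProductSpace

namespace Real

variable {V : Type*} [NormedAddCommGroup V] [InnerProductSpace ℝ V] [FiniteDimensional ℝ V]
  [MeasurableSpace V] [BorelSpace V]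

theorem fourier_fourierChar_smul {E : Type*} [NormedAddCommGroup E] [NormedSpace ℂ E]
    (f : V → E) (x ξ : V) :
    𝓕 (fun y ↦ 𝐞 ⟪y, x⟫ • f y) ξ = 𝓕 f (ξ - x) := by
  simp only [fourier_eq, smul_smul, ← AddChar.map_add_eq_mul, inner_sub_right]
  ring_nf

theorem integral_fourier_mul_eq {f g : V → ℂ} (hf : Integrable f) (hg : Integrable g) :
    ∫ ξ, 𝓕 f ξ * g ξ = ∫ x, f x * 𝓕 g x := by
  simpa using! VectorFourier.integral_fourierIntegral_smul_eq_flip (L := innerₗ V)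
    continuous_fourierChar continuous_inner hf hg

end Real

namespace SchwartzMap

theorem exists_enorm_le_mul_inv_enorm {E F : Type*} [NormedAddCommGroup E] [NormedSpace ℝ E]
    [NormedAddCommGroup F] [NormedSpace ℝ F] (u : 𝓢(E, F)) :
    ∃ C : ℝ≥0∞, 0 < C ∧ C < ⊤ ∧ ∀ y, ‖u y‖ₑ ≤ C * ‖y‖ₑ⁻¹ := by
  set C := SchwartzMap.seminorm ℝ 1 0 u + 1
  have hC : 0 < C := by positivity
  refine ⟨ENNReal.ofReal C, ofReal_pos.2 hC, ofReal_lt_top, fun y ↦ ?_⟩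
  rcases eq_or_ne y 0 with rfl | hy
  · simp [ENNReal.mul_top (ofReal_pos.2 hC).ne']
  rw [← div_eq_mul_inv, ENNReal.le_div_iff_mul_le (by simp [hy]) (by simp), ← ofReal_norm,
    ← ofReal_norm, ← ENNReal.ofReal_mul (norm_nonneg _)]
  gcongr
  calc ‖u y‖ * ‖y‖ ≤ SchwartzMap.seminorm ℝ 1 0 u := by
        simpa [mul_comm] using norm_pow_mul_le_seminorm ℝ u 1 y
    _ ≤ C := le_add_of_nonneg_right zero_le_one

variable {V : Type*} [NormedAddCommGroup V] [InnerProductSpace ℝ V] [FiniteDimensional ℝ V]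
  [MeasurableSpace V] [BorelSpace V]

theorem exists_enorm_integral_translate_mul_le (w : 𝓢(V, ℂ)) :
    ∃ C : ℝ≥0∞, 0 < C ∧ C < ⊤ ∧ ∀ f : V → ℂ, Integrable f → ∀ x : V,
      ‖∫ ξ, w (ξ - x) * f ξ‖ₑ ≤ C * ∫⁻ ξ, ‖ξ‖ₑ⁻¹ * ‖𝓕 f ξ‖ₑ := by
  set u := 𝓕⁻ w
  obtain ⟨C, hC_pos, hC_lt_top, hu⟩ := u.exists_enorm_le_mul_inv_enorm
  refine ⟨C, hC_pos, hC_lt_top, fun f hf x ↦ ?_⟩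
  have hw : ∀ ξ, w (ξ - x) = 𝓕 (fun y ↦ 𝐞 ⟪y, x⟫ • u y) ξ := fun ξ ↦ by
    rw [Real.fourier_fourierChar_smul, ← fourier_coe, fourier_fourierInv_eq]
  have hint : Integrable (fun y ↦ 𝐞 ⟪y, x⟫ • u y) := by
    simpa [inner_neg_right] using (Real.fourierIntegral_convergent_iff (-x)).2 u.integrable
  calc ‖∫ ξ, w (ξ - x) * f ξ‖ₑ = ‖∫ y, (𝐞 ⟪y, x⟫ • u y) * 𝓕 f y‖ₑ := by
        simp_rw [hw, Real.integral_fourier_mul_eq hint hf]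
    _ ≤ ∫⁻ y, ‖(𝐞 ⟪y, x⟫ • u y) * 𝓕 f y‖ₑ := enorm_integral_le_lintegral_enorm _
    _ = ∫⁻ y, ‖u y‖ₑ * ‖𝓕 f y‖ₑ := by
        simp_rw [enorm_mul, ← ofReal_norm, Circle.norm_smul]
    _ ≤ ∫⁻ y, C * ‖y‖ₑ⁻¹ * ‖𝓕 f y‖ₑ := by
        gcongr with y
        exact hu y
    _ = C * ∫⁻ y, ‖y‖ₑ⁻¹ * ‖𝓕 f y‖ₑ := by
        simp_rw [mul_assoc]
        exact lintegral_const_mul' _ _ hC_lt_top.ne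

end SchwartzMap

/-- `L^∞` bound for mollified data: for a Schwartz function `ζ` and `λ > 0` there is a
constant `C_λ > 0` such that for every integrable `f` with finite `X^{-1}` norm,
`sup_x |(ζ^λ ∗ f)(x)| ≤ C_λ ∫ ‖ξ‖⁻¹ |𝓕f(ξ)| dξ`. -/
theorem stmt_10 (ζ : SchwartzMap (EuclideanSpace ℝ (Fin 3)) ℂ)
    (lam : ℝ) (hlam : 0 < lam) :
    ∃ C : ℝ≥0∞, 0 < C ∧ C < ⊤ ∧
      ∀ f : EuclideanSpace ℝ (Fin 3) → ℂ, Integrable f →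
        (∫⁻ ξ, (‖ξ‖₊ : ℝ≥0∞)⁻¹ * (‖𝓕 f ξ‖₊ : ℝ≥0∞)) < ⊤ →
        ∀ x : EuclideanSpace ℝ (Fin 3),
          (‖∫ y, ((lam : ℂ) ^ (-3 : ℤ) * ζ (lam⁻¹ • (x - y))) * f y‖₊ : ℝ≥0∞) ≤
            C * ∫⁻ ξ, (‖ξ‖₊ : ℝ≥0∞)⁻¹ * (‖𝓕 f ξ‖₊ : ℝ≥0∞) := by
  set w : 𝓢(EuclideanSpace ℝ (Fin 3), ℂ) := (lam : ℂ) ^ (-3 : ℤ) •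
    compCLMOfContinuousLinearEquiv ℂ
      (ContinuousLinearEquiv.smulLeft (Units.mk0 (-lam⁻¹) (by simp [hlam.ne']))) ζ
  obtain ⟨C, hC_pos, hC_lt_top, hC⟩ := w.exists_enorm_integral_translate_mul_le
  refine ⟨C, hC_pos, hC_lt_top, fun f hf _ x ↦ ?_⟩
  have hw : ∀ y, (lam : ℂ) ^ (-3 : ℤ) * ζ (lam⁻¹ • (x - y)) = w (y - x) := fun y ↦ by
    simp only [w, smul_apply, compCLMOfContinuousLinearEquiv_apply, Function.comp_apply,
      ContinuousLinearEquiv.smulLeft_apply_apply, smul_eq_mul, Units.smul_def, Units.val_mk0,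
      neg_smul, ← smul_neg, neg_sub]
  simp_rw [hw]
  exact hC f hf x
end
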